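/- For every q ∈ ℂ and all natural numbers m, j: ∑_{i=0}^{m} C(m,i)_q · (-1)^{i+j} · q^{(i-j)(i-j-1)/2} · C(i,j)_q = δ_{mj} (Kronecker delta). Here (i-j)(i-j-1)/2 is a nonnegative integer for every integer i-j, and all terms with i < j vanish since C(i,j)_q = 0 for j > i. -/

import Mathlib

/-- The Gaussian ($q$-)binomial coefficient `C(n,k)_q`, defined by the recursion
`C(n+1,k)_q = C(n,k-1)_q + q^k * C(n,k)_q`, with `C(n,0)_q = C(n,n)_q = 1` and
`C(n,k)_q = 0` for `k > n`. -/
noncomputable def qBinom (q : ℂ) : ℕ → ℕ → ℂ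
  | 0, 0 => 1
  | 0, _ + 1 => 0
  | _ + 1, 0 => 1
  | n + 1, k + 1 => qBinom q n k + q ^ (k + 1) * qBinom q n (k + 1)

/-- The matrix `σ₁(q,n)` with entries `σ₁(q,n)_{km} = C(n-k, n-m)_q`. -/
noncomputable def sigma1 (q : ℂ) (n : ℕ) : Matrix (Fin (n + 1)) (Fin (n + 1)) ℂ :=
  fun k m => qBinom q (n - k.val) (n - m.val)

/-- The matrix `σ₂(q,n)` with entries
`σ₂(q,n)_{km} = (-1)^{k+m} q^{-(k-m)(k-m-1)/2} C(k,m)_{q⁻¹}` for `m ≤ k`, and `0` otherwise. -/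
noncomputable def sigma2 (q : ℂ) (n : ℕ) : Matrix (Fin (n + 1)) (Fin (n + 1)) ℂ :=
  fun k m =>
    if m.val ≤ k.val then
      (-1 : ℂ) ^ (k.val + m.val) *
        q ^ (-(((k.val - m.val) * (k.val - m.val - 1) / 2 : ℕ) : ℤ)) *
        qBinom q⁻¹ k.val m.val
    else 0

/-- The matrix `S(q)` with entries `S(q)_{km} = (-1)^k q^{-k(k-1)/2}` when `k+m = n`,
and `0` otherwise. -/
noncomputable def Smat (q : ℂ) (n : ℕ) : Matrix (Fin (n + 1)) (Fin (n + 1)) ℂ :=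
  fun k m =>
    if k.val + m.val = n then (-1 : ℂ) ^ k.val * q ^ (-((k.val * (k.val - 1) / 2 : ℕ) : ℤ))
    else 0

/-- `A^♯`, the matrix with entries `(A^♯)_{ij} = A_{n-i, n-j}`. -/
noncomputable def msharp {n : ℕ} (A : Matrix (Fin (n + 1)) (Fin (n + 1)) ℂ) :
    Matrix (Fin (n + 1)) (Fin (n + 1)) ℂ :=
  fun i j => A i.rev j.rev

/-!
The sum is the `(m, j)` entry of `C · D`, where `C = (C(m,i)_q)` and
`D = ((-1)^{i+j} q^{binom(i-j,2)} C(i,j)_q)`. Expanding `C(m+1,i)_q` by the recursion turns a sum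
against row `m+1` of `C` into a sum against row `m` with `f(i)` replaced by `f(i+1) + q^i f(i)`.
Applied to a column of `D`, this operator kills column `0` and maps column `j+1` to column `j`,
which is again the recursion for `C(i+1,j+1)_q` together with `binom(d+1,2) = binom(d,2) + d`.
Induction on `m` finishes the proof.
-/

@[simp]
lemma qBinom_zero_right (q : ℂ) : ∀ n, qBinom q n 0 = 1
  | 0 => rfl
  | _ + 1 => rfl

lemma qBinom_succ_succ (q : ℂ) (n k : ℕ) :
    qBinom q (n + 1) (k + 1) = qBinom q n k + q ^ (k + 1) * qBinom q n (k + 1) := rfl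

lemma qBinom_eq_zero_of_lt (q : ℂ) : ∀ {n k : ℕ}, n < k → qBinom q n k = 0
  | 0, _ + 1, _ => rfl
  | n + 1, k + 1, h => by
    rw [qBinom_succ_succ, qBinom_eq_zero_of_lt q (by omega : n < k),
      qBinom_eq_zero_of_lt q (by omega : n < k + 1), mul_zero, add_zero]

lemma sum_range_succ_qBinom_mul (q : ℂ) (m : ℕ) (f : ℕ → ℂ) :
    ∑ i ∈ Finset.range (m + 2), qBinom q (m + 1) i * f i
      = ∑ i ∈ Finset.range (m + 1), qBinom q m i * (f (i + 1) + q ^ i * f i) := by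
  have hshift : ∑ i ∈ Finset.range (m + 1), qBinom q m i * (q ^ i * f i)
      = f 0 + ∑ i ∈ Finset.range (m + 1), q ^ (i + 1) * qBinom q m (i + 1) * f (i + 1) := by
    rw [Finset.sum_range_succ' _ m, Finset.sum_range_succ _ m,
      qBinom_eq_zero_of_lt q (Nat.lt_succ_self m)]
    simp only [pow_zero, qBinom_zero_right, one_mul, mul_zero, zero_mul, add_zero]
    simp only [add_comm (f 0), mul_left_comm (qBinom q m _), mul_assoc]
  simp only [mul_add, Finset.sum_add_distrib, Finset.sum_range_succ' _ (m + 1),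
    qBinom_succ_succ, add_mul, qBinom_zero_right, one_mul, hshift]
  ring

/-- The entries of the inverse of the lower unitriangular matrix `(C(i,j)_q)`. -/
noncomputable def qBinomInv (q : ℂ) (i j : ℕ) : ℂ :=
  (-1) ^ (i + j) * q ^ (i - j).choose 2 * qBinom q i j

lemma qBinomInv_zero_left (q : ℂ) (j : ℕ) : qBinomInv q 0 j = if j = 0 then 1 else 0 := by
  rcases j with _ | j
  · simp [qBinomInv]
  · simp [qBinomInv, qBinom_eq_zero_of_lt q (Nat.succ_pos j)]

lemma qBinomInv_succ_left_zero (q : ℂ) (i : ℕ) :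
    qBinomInv q (i + 1) 0 + q ^ i * qBinomInv q i 0 = 0 := by
  simp only [qBinomInv, Nat.sub_zero, Nat.choose_succ_succ', Nat.choose_one_right,
    qBinom_zero_right, add_zero, pow_succ, pow_add]
  ring

lemma qBinomInv_succ_left_succ (q : ℂ) (i j : ℕ) :
    qBinomInv q (i + 1) (j + 1) + q ^ i * qBinomInv q i (j + 1) = qBinomInv q i j := by
  have hpow : q ^ (i - j).choose 2 * q ^ (j + 1) * qBinom q i (j + 1)
      = q ^ i * q ^ (i - (j + 1)).choose 2 * qBinom q i (j + 1) := by
    rcases lt_or_ge i (j + 1) with hij | hij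
    · simp [qBinom_eq_zero_of_lt q hij]
    · obtain ⟨d, rfl⟩ := Nat.exists_eq_add_of_le hij
      rw [show j + 1 + d - j = d + 1 by omega, Nat.add_sub_cancel_left, Nat.choose_succ_succ',
        Nat.choose_one_right, ← pow_add, ← pow_add]
      ring_nf
  simp only [qBinomInv, qBinom_succ_succ, Nat.add_sub_add_right, pow_succ]
  linear_combination (-1 : ℂ) ^ (i + j) * hpow

lemma sum_qBinom_mul_qBinomInv (q : ℂ) :
    ∀ m j : ℕ, ∑ i ∈ Finset.range (m + 1), qBinom q m i * qBinomInv q i j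
      = if m = j then 1 else 0
  | 0, j => by simp [qBinomInv_zero_left, eq_comm]
  | m + 1, 0 => by
    simp [sum_range_succ_qBinom_mul, qBinomInv_succ_left_zero]
  | m + 1, j + 1 => by
    simp [sum_range_succ_qBinom_mul, qBinomInv_succ_left_succ, sum_qBinom_mul_qBinomInv q m j]

lemma Int.natCast_mul_sub_one_ediv_two (d : ℕ) :
    (d : ℤ) * (d - 1) / 2 = (d.choose 2 : ℤ) := by
  rcases d with _ | d
  · rfl
  · rw [Nat.choose_two_right, Int.natCast_ediv]
    push_cast [Nat.add_sub_cancel]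
    ring_nf

/-- The orthogonality identity
`∑_{i=0}^{m} C(m,i)_q (-1)^{i+j} q^{(i-j)(i-j-1)/2} C(i,j)_q = δ_{mj}`. -/
theorem qBinom_alternating_orthogonality (q : ℂ) (m j : ℕ) :
    ∑ i ∈ Finset.range (m + 1),
        qBinom q m i * (-1 : ℂ) ^ (i + j) *
          q ^ ((((i : ℤ) - (j : ℤ)) * ((i : ℤ) - (j : ℤ) - 1)) / 2) * qBinom q i j
      = if m = j then 1 else 0 := by
  rw [← sum_qBinom_mul_qBinomInv q m j]
  refine Finset.sum_congr rfl fun i _ => ?_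
  rcases lt_or_ge i j with hij | hij
  · simp [qBinomInv, qBinom_eq_zero_of_lt q hij]
  · obtain ⟨d, rfl⟩ := Nat.exists_eq_add_of_le hij
    simp only [qBinomInv, Nat.add_sub_cancel_left, Nat.cast_add, add_sub_cancel_left,
      Int.natCast_mul_sub_one_ediv_two, zpow_natCast]
    ring
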